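/- arXiv:math/0310348 — 3 statements merged into one kernel-verified Lean document; each statement's English description precedes it below -/
import Mathlib

section
/- For every integer d ≥ 1, every b with 0 ≤ b < d, and every α ∈ {±(2^d+1)^{-1}}, the collection of intervals D_{d,b,α} := { 2^{kd+b}((0,1) + j + (-1)^k α) : k ∈ ℤ, j ∈ ℤ } is a grid: any two intervals in the collection are either disjoint or one contains the other. -/
/-- Core interval lemma. -/
lemma core_ivl (a ℓ : ℝ) (hℓ : 0 < ℓ) (p q : ℤ) (hpq : p < q) :
    Set.Ioo a (a + ℓ) ∩ Set.Ioo (a + p * ℓ) (a + q * ℓ) = ∅ ∨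
      Set.Ioo a (a + ℓ) ⊆ Set.Ioo (a + p * ℓ) (a + q * ℓ) := by
  rcases le_or_gt 1 p with h | h
  · left
    apply Set.eq_empty_iff_forall_notMem.2
    rintro x ⟨⟨_, hx2⟩, ⟨hx3, _⟩⟩
    have : (1 : ℝ) ≤ (p : ℝ) := by exact_mod_cast h
    nlinarith
  · rcases le_or_gt q 0 with h' | h'
    · left
      apply Set.eq_empty_iff_forall_notMem.2
      rintro x ⟨⟨hx1, _⟩, ⟨_, hx4⟩⟩
      have : (q : ℝ) ≤ 0 := by exact_mod_cast h'
      nlinarith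
    · right
      have hp : (p : ℝ) ≤ 0 := by exact_mod_cast (by omega : p ≤ 0)
      have hq : (1 : ℝ) ≤ (q : ℝ) := by exact_mod_cast h'
      apply Set.Ioo_subset_Ioo <;> nlinarith

lemma pow_split (d b : ℕ) (k : ℤ) (s : ℕ) :
    (2 : ℝ) ^ ((k + s) * d + b) = 2 ^ (s * d) * (2 : ℝ) ^ (k * d + b) := by
  rw [← zpow_natCast (2 : ℝ) (s * d), ← zpow_add₀ (two_ne_zero)]
  congr 1
  push_cast
  ring

/-- Sign extraction: `(-1)^k * α * (2^d+1)` is an integer `±1`. -/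
lemma sign_int (d : ℕ) (α : ℝ)
    (hα : α = ((2 : ℝ) ^ d + 1)⁻¹ ∨ α = -((2 : ℝ) ^ d + 1)⁻¹) (k : ℤ) :
    ∃ e : ℤ, (e : ℝ) = (-1 : ℝ) ^ k * α * ((2 : ℝ) ^ d + 1) := by
  have hne : ((2 : ℝ) ^ d + 1) ≠ 0 := by positivity
  rcases Int.even_or_odd k with hk | hk
  · rcases hα with h | h
    · exact ⟨1, by rw [hk.neg_one_zpow, h]; push_cast; field_simp⟩
    · exact ⟨-1, by rw [hk.neg_one_zpow, h]; push_cast; field_simp⟩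
  · rcases hα with h | h
    · exact ⟨-1, by rw [hk.neg_one_zpow, h]; push_cast; field_simp⟩
    · exact ⟨1, by rw [hk.neg_one_zpow, h]; push_cast; field_simp⟩

/-- Key: left endpoints at coarser scale lattice. -/
lemma key_lattice (d b : ℕ) (α : ℝ)
    (hα : α = ((2 : ℝ) ^ d + 1)⁻¹ ∨ α = -((2 : ℝ) ^ d + 1)⁻¹)
    (k j j' : ℤ) (s : ℕ) :
    ∃ p : ℤ, (2 : ℝ) ^ ((k + s) * d + b) * ((j' : ℝ) + (-1 : ℝ) ^ (k + (s : ℤ)) * α)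
      = 2 ^ (k * d + b) * ((j : ℝ) + (-1 : ℝ) ^ k * α) + p * 2 ^ (k * d + b) := by
  have hne : ((2 : ℝ) ^ d + 1) ≠ 0 := by positivity
  obtain ⟨e, he⟩ := sign_int d α hα k
  obtain ⟨t, ht⟩ : ((2 : ℤ) ^ d + 1) ∣ (-(2 : ℤ) ^ d) ^ s - 1 := by
    have := sub_dvd_pow_sub_pow (-(2 : ℤ) ^ d) 1 s
    rw [one_pow] at this
    have h2 : -(2 : ℤ) ^ d - 1 = -((2 : ℤ) ^ d + 1) := by ring
    rw [h2] at this
    exact (dvd_neg.2 (dvd_refl _)).trans this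
  refine ⟨2 ^ (s * d) * j' - j + e * t, ?_⟩
  rw [pow_split]
  have hε : (-1 : ℝ) ^ (k + (s : ℤ)) = (-1 : ℝ) ^ k * (-1 : ℝ) ^ s := by
    rw [zpow_add₀ (by norm_num : (-1 : ℝ) ≠ 0), zpow_natCast]
  rw [hε]
  have hts : ((2 : ℝ) ^ d + 1) * (t : ℝ) = (-(2 : ℝ) ^ d) ^ s - 1 := by
    exact_mod_cast (congrArg (Int.cast : ℤ → ℝ) ht).symm
  have hkey : (2 : ℝ) ^ (s * d) * ((-1 : ℝ) ^ k * (-1 : ℝ) ^ s * α)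
      - (-1 : ℝ) ^ k * α = (e : ℝ) * t := by
    have h1 : (2 : ℝ) ^ (s * d) * ((-1 : ℝ) ^ k * (-1 : ℝ) ^ s * α)
        - (-1 : ℝ) ^ k * α = (-1 : ℝ) ^ k * α * ((-(2 : ℝ) ^ d) ^ s - 1) := by
      rw [neg_pow, pow_mul]
      ring
    rw [h1, he, ← hts]
    ring
  push_cast
  linear_combination (2 : ℝ) ^ (k * (d:ℤ) + (b:ℤ)) * hkey

/-- The one-sided statement: if `I` has scale `k ≤ k'` (scale of `J`), then
`I ∩ J = ∅` or `I ⊆ J`. -/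
lemma aux_main (d b : ℕ) (α : ℝ)
    (hα : α = ((2 : ℝ) ^ d + 1)⁻¹ ∨ α = -((2 : ℝ) ^ d + 1)⁻¹)
    (k j k' j' : ℤ) (hkk : k ≤ k') :
    Set.Ioo ((2 : ℝ) ^ (k * d + b) * ((j : ℝ) + (-1 : ℝ) ^ k * α))
        ((2 : ℝ) ^ (k * d + b) * (1 + (j : ℝ) + (-1 : ℝ) ^ k * α)) ∩
      Set.Ioo ((2 : ℝ) ^ (k' * d + b) * ((j' : ℝ) + (-1 : ℝ) ^ k' * α))
        ((2 : ℝ) ^ (k' * d + b) * (1 + (j' : ℝ) + (-1 : ℝ) ^ k' * α)) = ∅ ∨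
    Set.Ioo ((2 : ℝ) ^ (k * d + b) * ((j : ℝ) + (-1 : ℝ) ^ k * α))
        ((2 : ℝ) ^ (k * d + b) * (1 + (j : ℝ) + (-1 : ℝ) ^ k * α)) ⊆
      Set.Ioo ((2 : ℝ) ^ (k' * d + b) * ((j' : ℝ) + (-1 : ℝ) ^ k' * α))
        ((2 : ℝ) ^ (k' * d + b) * (1 + (j' : ℝ) + (-1 : ℝ) ^ k' * α)) := by
  obtain ⟨s, rfl⟩ : ∃ s : ℕ, k' = k + s := ⟨(k' - k).toNat, by omega⟩
  set ℓ : ℝ := (2 : ℝ) ^ (k * d + b) with hℓdef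
  have hℓ : 0 < ℓ := by positivity
  set a : ℝ := ℓ * ((j : ℝ) + (-1 : ℝ) ^ k * α) with ha
  obtain ⟨p, hp⟩ := key_lattice d b α hα k j j' s
  obtain ⟨q, hq⟩ := key_lattice d b α hα k j (j' + 1) s
  -- right endpoint of J equals left endpoint with j'+1
  have hre : (2 : ℝ) ^ ((k + s) * d + b) * (1 + (j' : ℝ) + (-1 : ℝ) ^ (k + (s : ℤ)) * α)
      = (2 : ℝ) ^ ((k + s) * d + b) * (((j' + 1 : ℤ) : ℝ) + (-1 : ℝ) ^ (k + (s : ℤ)) * α) := by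
    push_cast; ring
  have hIright : (2 : ℝ) ^ (k * d + b) * (1 + (j : ℝ) + (-1 : ℝ) ^ k * α) = a + ℓ := by
    rw [ha, hℓdef]; ring
  have hpq : p < q := by
    have hdiff : (q : ℝ) * ℓ - (p : ℝ) * ℓ = (2 : ℝ) ^ ((k + s) * d + b) := by
      have h1 : (2 : ℝ) ^ ((k + s) * d + b) * (((j' + 1 : ℤ) : ℝ) + (-1 : ℝ) ^ (k + (s : ℤ)) * α)
          - (2 : ℝ) ^ ((k + s) * d + b) * ((j' : ℝ) + (-1 : ℝ) ^ (k + (s : ℤ)) * α)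
          = (2 : ℝ) ^ ((k + s) * d + b) := by push_cast; ring
      rw [hℓdef]
      linarith [hq, hp, h1]
    have hpos : (0 : ℝ) < (2 : ℝ) ^ ((k + s) * d + b) := by positivity
    have : (p : ℝ) < (q : ℝ) := by nlinarith
    exact_mod_cast this
  rw [hIright, hre, hp, hq]
  exact core_ivl a ℓ hℓ p q hpq

/-- Membership in the shifted dyadic grid `D_{d,b,α}`:
`I = 2^(k*d+b) * ((0,1) + j + (-1)^k * α)` for some integers `k, j`. -/
def memShiftedGrid (d b : ℕ) (α : ℝ) (I : Set ℝ) : Prop :=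
  ∃ k j : ℤ, I = Set.Ioo ((2 : ℝ) ^ (k * d + b) * ((j : ℝ) + (-1 : ℝ) ^ k * α))
      ((2 : ℝ) ^ (k * d + b) * (1 + (j : ℝ) + (-1 : ℝ) ^ k * α))

theorem hankel_stmt2 (d : ℕ) (hd : 1 ≤ d) (b : ℕ) (hb : b < d) (α : ℝ)
    (hα : α = ((2 : ℝ) ^ d + 1)⁻¹ ∨ α = -((2 : ℝ) ^ d + 1)⁻¹) :
    ∀ I J : Set ℝ, memShiftedGrid d b α I → memShiftedGrid d b α J →
      I ∩ J = ∅ ∨ I ⊆ J ∨ J ⊆ I := by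
  rintro I J ⟨k, j, rfl⟩ ⟨k', j', rfl⟩
  rcases le_total k k' with h | h
  · rcases aux_main d b α hα k j k' j' h with h1 | h1
    · exact Or.inl h1
    · exact Or.inr (Or.inl h1)
  · rcases aux_main d b α hα k' j' k j h with h1 | h1
    · exact Or.inl (by rw [Set.inter_comm]; exact h1)
    · exact Or.inr (Or.inr h1)
end

section
/- Let d ≥ 1 be an integer and δ = 1/(2^d+1). For every dyadic interval I ∈ D (i.e., I = 2^k((0,1)+j) for integers j, k), both translated intervals I + δ|I| and I − δ|I| belong to the shifted dyadic collection D_d := ∪_{α ∈ {±(2^d+1)^{-1}}} ∪_{b=0}^{d-1} D_{d,b,α}. -/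
/-- Membership in the full shifted collection `D_d`. -/
def memShiftedFamily (d : ℕ) (I : Set ℝ) : Prop :=
  ∃ b : ℕ, b < d ∧ ∃ α : ℝ,
    (α = ((2 : ℝ) ^ d + 1)⁻¹ ∨ α = -((2 : ℝ) ^ d + 1)⁻¹) ∧ memShiftedGrid d b α I

theorem hankel_stmt4 (d : ℕ) (hd : 1 ≤ d) (δ : ℝ) (hδ : δ = ((2 : ℝ) ^ d + 1)⁻¹)
    (k j : ℤ) (I : Set ℝ)
    (hI : I = Set.Ioo ((2 : ℝ) ^ k * (j : ℝ)) ((2 : ℝ) ^ k * ((j : ℝ) + 1)))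
    (s : ℝ) (hs : s = δ * (2 : ℝ) ^ k ∨ s = -(δ * (2 : ℝ) ^ k)) :
    memShiftedFamily d ((fun x => x + s) '' I) := by
  have hd0 : (0:ℤ) < (d:ℤ) := by exact_mod_cast hd
  set k' : ℤ := k / (d:ℤ) with hk'
  set b : ℕ := (k % (d:ℤ)).toNat with hb
  have hbz : (b : ℤ) = k % (d:ℤ) := Int.toNat_of_nonneg (Int.emod_nonneg k (by omega))
  have hkb : k' * (d:ℤ) + (b:ℤ) = k := by
    have h := Int.mul_ediv_add_emod k (d:ℤ)
    rw [hbz, hk']; linarith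
  have hblt : b < d := by
    have := Int.emod_lt_of_pos k hd0
    omega
  have hpow : (2:ℝ) ^ (k' * (d:ℤ) + (b:ℤ)) = (2:ℝ) ^ k := by rw [hkb]
  have himg : (fun x => x + s) '' I
      = Set.Ioo ((2 : ℝ) ^ k * (j : ℝ) + s) ((2 : ℝ) ^ k * ((j : ℝ) + 1) + s) := by
    rw [hI]; exact Set.image_add_const_Ioo _ _ _
  have hee : (-1:ℝ) ^ k' = 1 ∨ (-1:ℝ) ^ k' = -1 := by
    rcases Int.even_or_odd k' with h | h
    · exact Or.inl h.neg_one_zpow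
    · exact Or.inr h.neg_one_zpow
  have he2 : (-1:ℝ) ^ k' * (-1:ℝ) ^ k' = 1 := by
    rcases hee with h | h <;> rw [h] <;> norm_num
  rcases hs with hs | hs
  · refine ⟨b, hblt, (-1:ℝ) ^ k' * δ, ?_, k', j, ?_⟩
    · rcases hee with h | h
      · left; rw [h, one_mul, hδ]
      · right; rw [h, hδ]; ring
    · rw [himg, hpow]
      have h3 : (-1:ℝ) ^ k' * ((-1:ℝ) ^ k' * δ) = δ := by rw [← mul_assoc, he2, one_mul]
      rw [h3, hs]; congr 1 <;> ring
  · refine ⟨b, hblt, -((-1:ℝ) ^ k' * δ), ?_, k', j, ?_⟩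
    · rcases hee with h | h
      · right; rw [h, one_mul, hδ]
      · left; rw [h, hδ]; ring
    · rw [himg, hpow]
      have h3 : (-1:ℝ) ^ k' * -((-1:ℝ) ^ k' * δ) = -δ := by
        rw [mul_neg, ← mul_assoc, he2, one_mul]
      rw [h3, hs]; congr 1 <;> ring
end

section
/- Fix an integer d ≥ 1 and δ ∈ (0,1), and let M^{D_d} be the maximal operator taking suprema of averages over intervals in the union D_d of the 2d grids D_{d,b,α} (b = 0,...,d−1, α = ±(2^d+1)^{-1}). Then for every measurable U ⊂ ℝ of finite measure, |{ M^{D_d} 1_U > 1−δ }| ≤ (1 + 2d[(1−δ)^{-1} − 1]) |U|. -/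
open MeasureTheory

/-!
Within one grid `D_{d,b,α}` two intervals that meet are nested: for `α = ±(2^d+1)⁻¹` every
endpoint at scale `k'` is also an endpoint at every scale `k ≤ k'`, because
`2^d + 1 ∣ (-2^d)^n - 1`. Intervals on which `U` has density `> 1-δ` are shorter than
`|U|/(1-δ)`, so each lies in a maximal one, and the maximal ones are disjoint. On each of them
`|I \ U| ≤ ((1-δ)⁻¹ - 1)|U ∩ I|`; summing gives
`|{M^{D_{d,b,α}} 1_U > 1-δ} \ U| ≤ ((1-δ)⁻¹ - 1)|U|`, and `D_d` is the union of `2d` such grids.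
-/

open Set

theorem two_pow_add_one_dvd (d n : ℕ) : (2 ^ d + 1 : ℤ) ∣ 2 ^ (n * d) * (-1) ^ n - 1 := by
  have h := sub_dvd_pow_sub_pow (-(2 : ℤ) ^ d) 1 n
  rwa [one_pow, neg_pow, ← pow_mul, mul_comm d, mul_comm, ← neg_add', neg_dvd] at h

theorem StrictMono.Ioo_subset_of_not_disjoint {α : Type*} [LinearOrder α] {f : ℤ → α}
    (hf : StrictMono f) {j m n : ℤ} (h : ¬Disjoint (Ioo (f j) (f (j + 1))) (Ioo (f m) (f n))) :
    Ioo (f j) (f (j + 1)) ⊆ Ioo (f m) (f n) := by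
  obtain ⟨x, ⟨hjx, hxj⟩, hmx, hxn⟩ := not_disjoint_iff.1 h
  have hmj : m ≤ j := Int.lt_add_one_iff.1 (hf.lt_iff_lt.1 (hmx.trans hxj))
  have hjn : j + 1 ≤ n := hf.lt_iff_lt.1 (hjx.trans hxn)
  exact Ioo_subset_Ioo (hf.monotone hmj) (hf.monotone hjn)

theorem StrictMono.eq_of_not_disjoint_Ioo {α : Type*} [LinearOrder α] {f : ℤ → α}
    (hf : StrictMono f) {j m : ℤ}
    (h : ¬Disjoint (Ioo (f j) (f (j + 1))) (Ioo (f m) (f (m + 1)))) : j = m := by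
  obtain ⟨x, ⟨hjx, hxj⟩, hmx, hxm⟩ := not_disjoint_iff.1 h
  have := hf.lt_iff_lt.1 (hmx.trans hxj)
  have := hf.lt_iff_lt.1 (hjx.trans hxm)
  omega

theorem exists_pairwiseDisjoint_maximal_of_nested {ι α : Type*} (I : ι → Set α) (r : ι → ℤ)
    {S : Set ι} (hS : BddAbove (r '' S))
    (hnest : ∀ p q, r p ≤ r q → ¬Disjoint (I p) (I q) → I p ⊆ I q)
    (hsame : ∀ p q, r p = r q → ¬Disjoint (I p) (I q) → p = q) :
    ∃ M ⊆ S, M.PairwiseDisjoint I ∧ ∀ p ∈ S, ∃ q ∈ M, I p ⊆ I q := by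
  refine ⟨{p ∈ S | ∀ q ∈ S, I p ⊆ I q → r q ≤ r p}, fun p hp => hp.1, ?_, ?_⟩
  · intro p hp q hq hpq
    by_contra h
    wlog hle : r p ≤ r q generalizing p q
    · exact this hq hp hpq.symm (fun h' => h h'.symm) (le_of_not_ge hle)
    exact hpq (hsame p q (le_antisymm hle (hp.2 q hq.1 (hnest p q hle h))) h)
  · intro p hp
    obtain ⟨C, hC⟩ := hS
    obtain ⟨k, ⟨q, ⟨hqS, hpq⟩, rfl⟩, hmax⟩ := Int.exists_greatest_of_bdd
      (P := fun k => ∃ q, (q ∈ S ∧ I p ⊆ I q) ∧ r q = k)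
      ⟨C, fun _ ⟨q, ⟨hq, _⟩, hk⟩ => hk ▸ hC (mem_image_of_mem r hq)⟩ ⟨r p, p, ⟨hp, subset_rfl⟩, rfl⟩
    exact ⟨q, ⟨hqS, fun q' hq' hqq' => hmax _ ⟨q', ⟨hq', hpq.trans hqq'⟩, rfl⟩⟩, hpq⟩

theorem MeasureTheory.measure_diff_le_of_lt_measure_inter {α : Type*} [MeasurableSpace α]
    {μ : Measure α} {U I : Set α} (hU : MeasurableSet U) {t : ℝ} (ht : 0 < t)
    (h : ENNReal.ofReal t * μ I < μ (U ∩ I)) :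
    μ (I \ U) ≤ ENNReal.ofReal (t⁻¹ - 1) * μ (U ∩ I) := by
  have hI : μ I ≠ ⊤ := fun hI => by simp [hI, ht] at h
  have hsplit : μ (U ∩ I) + μ (I \ U) = μ I := by
    rw [inter_comm]; exact measure_inter_add_sdiff I hU
  have hA : μ (U ∩ I) ≠ ⊤ := ne_top_of_le_ne_top hI (measure_mono inter_subset_right)
  have hD : μ (I \ U) ≠ ⊤ := ne_top_of_le_ne_top hI (measure_mono sdiff_subset)
  rw [← hsplit, ← ENNReal.ofReal_toReal hA, ← ENNReal.ofReal_toReal hD,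
    ← ENNReal.ofReal_add ENNReal.toReal_nonneg ENNReal.toReal_nonneg, ← ENNReal.ofReal_mul ht.le,
    ENNReal.ofReal_lt_ofReal_iff_of_nonneg (by positivity)] at h
  rw [← ENNReal.ofReal_toReal hA, ← ENNReal.ofReal_toReal hD,
    ← ENNReal.ofReal_mul' ENNReal.toReal_nonneg]
  refine ENNReal.ofReal_le_ofReal ?_
  rw [sub_mul, inv_mul_eq_div, le_sub_iff_add_le, le_div_iff₀ ht]
  linarith

theorem MeasureTheory.measure_biUnion_diff_le_of_nested {ι α : Type*} [Countable ι]
    [MeasurableSpace α] {μ : Measure α} {I : ι → Set α} (r : ι → ℤ) {S : Set ι} {U : Set α}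
    {c : ENNReal} (hU : MeasurableSet U) (hI : ∀ p ∈ S, MeasurableSet (I p))
    (hS : BddAbove (r '' S)) (hnest : ∀ p q, r p ≤ r q → ¬Disjoint (I p) (I q) → I p ⊆ I q)
    (hsame : ∀ p q, r p = r q → ¬Disjoint (I p) (I q) → p = q)
    (hdens : ∀ p ∈ S, μ (I p \ U) ≤ c * μ (U ∩ I p)) :
    μ ((⋃ p ∈ S, I p) \ U) ≤ c * μ U := by
  obtain ⟨M, hMS, hdisj, hcover⟩ := exists_pairwiseDisjoint_maximal_of_nested I r hS hnest hsame
  have hsub : (⋃ p ∈ S, I p) \ U ⊆ ⋃ q ∈ M, I q \ U := by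
    rintro x ⟨hx, hxU⟩
    obtain ⟨p, hp, hxp⟩ := mem_iUnion₂.1 hx
    obtain ⟨q, hq, hpq⟩ := hcover p hp
    exact mem_iUnion₂.2 ⟨q, hq, hpq hxp, hxU⟩
  calc μ ((⋃ p ∈ S, I p) \ U) ≤ ∑' q : M, μ (I q \ U) :=
        (measure_mono hsub).trans (measure_biUnion_le μ M.to_countable _)
    _ ≤ ∑' q : M, c * μ (U ∩ I q) := ENNReal.tsum_le_tsum fun q => hdens q (hMS q.2)
    _ = c * μ (⋃ q ∈ M, U ∩ I q) := by
        rw [ENNReal.tsum_mul_left, measure_biUnion M.to_countable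
          (hdisj.mono fun _ => inter_subset_right) fun q hq => hU.inter (hI q (hMS hq))]
    _ ≤ c * μ U := by gcongr; exact iUnion₂_subset fun _ _ => inter_subset_left

namespace ShiftedGrid

variable {d b : ℕ} {α : ℝ}

noncomputable def left (d b : ℕ) (α : ℝ) (k j : ℤ) : ℝ := 2 ^ (k * d + b) * (j + (-1) ^ k * α)

/-- Written exactly as in `memShiftedGrid`, so that membership in the grid is definitional. -/
def interval (d b : ℕ) (α : ℝ) (k j : ℤ) : Set ℝ :=
  Ioo ((2 : ℝ) ^ (k * d + b) * ((j : ℝ) + (-1 : ℝ) ^ k * α))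
    ((2 : ℝ) ^ (k * d + b) * (1 + (j : ℝ) + (-1 : ℝ) ^ k * α))

theorem interval_eq_Ioo_left (k j : ℤ) :
    interval d b α k j = Ioo (left d b α k j) (left d b α k (j + 1)) := by
  simp only [interval, left, Int.cast_add, Int.cast_one, add_comm (1 : ℝ)]

theorem strictMono_left (k : ℤ) : StrictMono (left d b α k) := fun i j hij => by
  unfold left
  gcongr

theorem volume_interval (k j : ℤ) :
    volume (interval d b α k j) = ENNReal.ofReal (2 ^ (k * d + b)) := by
  rw [interval, Real.volume_Ioo]
  ring_nf

theorem exists_int_eq_mul (hα : α = ((2 : ℝ) ^ d + 1)⁻¹ ∨ α = -((2 : ℝ) ^ d + 1)⁻¹) (n : ℕ) :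
    ∃ c : ℤ, (c : ℝ) = α * (2 ^ (n * d) * (-1) ^ n - 1) := by
  obtain ⟨q, hq⟩ := two_pow_add_one_dvd d n
  have hq' : (2 : ℝ) ^ (n * d) * (-1) ^ n - 1 = (2 ^ d + 1) * q := by exact_mod_cast hq
  rcases hα with rfl | rfl
  · exact ⟨q, by rw [hq']; field_simp⟩
  · exact ⟨-q, by rw [hq']; push_cast; field_simp⟩

theorem exists_left_eq (hα : α = ((2 : ℝ) ^ d + 1)⁻¹ ∨ α = -((2 : ℝ) ^ d + 1)⁻¹) {k k' : ℤ}
    (hk : k ≤ k') (j' : ℤ) : ∃ m, left d b α k' j' = left d b α k m := by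
  obtain ⟨n, rfl⟩ := Int.exists_add_of_le hk
  obtain ⟨c, hc⟩ := exists_int_eq_mul hα n
  obtain ⟨c', hc'⟩ : ∃ c' : ℤ, (c' : ℝ) = (-1) ^ k * c := by
    rcases Int.even_or_odd k with hk | hk
    exacts [⟨c, by simp [hk.neg_one_zpow]⟩, ⟨-c, by simp [hk.neg_one_zpow]⟩]
  have hscale : (2 : ℝ) ^ ((k + n) * d + b) = 2 ^ (k * d + b) * 2 ^ (n * d) := by
    rw [← zpow_natCast, ← zpow_add₀ two_ne_zero]
    push_cast
    ring_nf
  have hsign : (-1 : ℝ) ^ (k + n) = (-1) ^ k * (-1) ^ n := by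
    rw [zpow_add₀ (by norm_num), zpow_natCast]
  refine ⟨2 ^ (n * d) * j' + c', ?_⟩
  simp only [left, hscale, hsign, Int.cast_add, Int.cast_mul, Int.cast_pow, Int.cast_ofNat, hc', hc]
  ring

theorem interval_subset_of_not_disjoint
    (hα : α = ((2 : ℝ) ^ d + 1)⁻¹ ∨ α = -((2 : ℝ) ^ d + 1)⁻¹) {k k' j j' : ℤ} (hk : k ≤ k')
    (h : ¬Disjoint (interval d b α k j) (interval d b α k' j')) :
    interval d b α k j ⊆ interval d b α k' j' := by
  obtain ⟨m, hm⟩ := exists_left_eq (b := b) hα hk j'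
  obtain ⟨n, hn⟩ := exists_left_eq (b := b) hα hk (j' + 1)
  rw [interval_eq_Ioo_left, interval_eq_Ioo_left, hm, hn] at h ⊢
  exact (strictMono_left k).Ioo_subset_of_not_disjoint h

theorem bddAbove_setOf_two_zpow_le (hd : 0 < d) (b : ℕ) (C : ℝ) :
    BddAbove {k : ℤ | (2 : ℝ) ^ (k * d + b) ≤ C} := by
  obtain ⟨N, hN⟩ := pow_unbounded_of_one_lt C one_lt_two
  refine ⟨N, fun k hk => ?_⟩
  by_contra! hNk
  have hexp : (N : ℤ) < k * d + b := by nlinarith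
  have := zpow_lt_zpow_right₀ (one_lt_two (α := ℝ)) hexp
  rw [zpow_natCast] at this
  exact absurd hk (by simp only [mem_ofPred_eq, not_le]; linarith)

/-- The superlevel set `{M^{D_{d,b,α}} 1_U > t}`. -/
def maximalSuperlevel (d b : ℕ) (α t : ℝ) (U : Set ℝ) : Set ℝ :=
  {x | ∃ k j : ℤ, x ∈ interval d b α k j ∧
    ENNReal.ofReal t * volume (interval d b α k j) < volume (U ∩ interval d b α k j)}

theorem volume_maximalSuperlevel_diff_le (hd : 0 < d)
    (hα : α = ((2 : ℝ) ^ d + 1)⁻¹ ∨ α = -((2 : ℝ) ^ d + 1)⁻¹) {t : ℝ} (ht : 0 < t) {U : Set ℝ}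
    (hU : MeasurableSet U) (hUfin : volume U < ⊤) :
    volume (maximalSuperlevel d b α t U \ U) ≤ ENNReal.ofReal (t⁻¹ - 1) * volume U := by
  set S := {p : ℤ × ℤ | ENNReal.ofReal t * volume (interval d b α p.1 p.2) <
    volume (U ∩ interval d b α p.1 p.2)}
  have hS : maximalSuperlevel d b α t U = ⋃ p ∈ S, interval d b α p.1 p.2 := by
    ext x
    simp [maximalSuperlevel, S, and_comm]
  rw [hS]
  refine measure_biUnion_diff_le_of_nested Prod.fst hU (fun _ _ => measurableSet_Ioo) ?_ ?_ ?_
    fun p hp => measure_diff_le_of_lt_measure_inter hU ht hp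
  · refine (bddAbove_setOf_two_zpow_le hd b ((volume U).toReal / t)).mono ?_
    rintro _ ⟨⟨k, j⟩, hp, rfl⟩
    have : ENNReal.ofReal (t * 2 ^ (k * d + b)) < volume U := by
      rw [ENNReal.ofReal_mul ht.le, ← volume_interval k j]
      exact hp.trans_le (measure_mono inter_subset_left)
    rw [mem_ofPred_eq, le_div_iff₀ ht, mul_comm]
    exact ((ENNReal.ofReal_lt_iff_lt_toReal (by positivity) hUfin.ne).1 this).le
  · rintro ⟨k, j⟩ ⟨k', j'⟩ hk h
    exact interval_subset_of_not_disjoint hα hk h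
  · rintro ⟨k, j⟩ ⟨k', j'⟩ (rfl : k = k') h
    rw [interval_eq_Ioo_left, interval_eq_Ioo_left] at h
    exact congrArg (Prod.mk k) ((strictMono_left k).eq_of_not_disjoint_Ioo h)

theorem setOf_memShiftedFamily_subset (d : ℕ) (t : ℝ) (U : Set ℝ) :
    {x : ℝ | ∃ I : Set ℝ, memShiftedFamily d I ∧ x ∈ I ∧
        ENNReal.ofReal t * volume I < volume (U ∩ I)} ⊆
      ⋃ b ∈ Finset.range d, (maximalSuperlevel d b ((2 : ℝ) ^ d + 1)⁻¹ t U ∪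
        maximalSuperlevel d b (-((2 : ℝ) ^ d + 1)⁻¹) t U) := by
  rintro x ⟨_, ⟨b, hb, α, hα, k, j, rfl⟩, hx, hdense⟩
  refine mem_iUnion₂.2 ⟨b, Finset.mem_range.2 hb, ?_⟩
  rcases hα with rfl | rfl
  exacts [Or.inl ⟨k, j, hx, hdense⟩, Or.inr ⟨k, j, hx, hdense⟩]

end ShiftedGrid

open ShiftedGrid in
theorem hankel_stmt7_general (d : ℕ) (δ : ℝ) (hδ : δ ∈ Set.Ioo (0 : ℝ) 1)
    (U : Set ℝ) (hU : MeasurableSet U) (hUfin : volume U < ⊤) :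
    volume {x : ℝ | ∃ I : Set ℝ, memShiftedFamily d I ∧ x ∈ I ∧
        ENNReal.ofReal (1 - δ) * volume I < volume (U ∩ I)} ≤
      ENNReal.ofReal (1 + 2 * d * ((1 - δ)⁻¹ - 1)) * volume U := by
  obtain ⟨hδ0, hδ1⟩ := hδ
  set a := ((2 : ℝ) ^ d + 1)⁻¹
  set c := ENNReal.ofReal ((1 - δ)⁻¹ - 1)
  set G := fun b α => maximalSuperlevel d b α (1 - δ) U
  have hgrid : ∀ b ∈ Finset.range d, ∀ α, (α = a ∨ α = -a) → volume (G b α \ U) ≤ c * volume U :=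
    fun b hb α hα => volume_maximalSuperlevel_diff_le (Nat.zero_lt_of_lt (Finset.mem_range.1 hb))
      hα (by linarith) hU hUfin
  calc _ ≤ volume (U ∪ (⋃ b ∈ Finset.range d, (G b a ∪ G b (-a))) \ U) :=
        measure_mono ((setOf_memShiftedFamily_subset d _ U).trans subset_union_right |>.trans
          union_sdiff_self.superset)
    _ ≤ volume U + ∑ b ∈ Finset.range d, (volume (G b a \ U) + volume (G b (-a) \ U)) := by
        refine (measure_union_le _ _).trans ?_
        gcongr
        simp only [iUnion_sdiff]
        refine (measure_biUnion_finset_le _ _).trans (Finset.sum_le_sum fun b _ => ?_)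
        rw [union_sdiff_distrib]
        exact measure_union_le _ _
    _ ≤ volume U + ∑ b ∈ Finset.range d, (c * volume U + c * volume U) := by
        gcongr with b hb
        exacts [hgrid b hb _ (Or.inl rfl), hgrid b hb _ (Or.inr rfl)]
    _ = ENNReal.ofReal (1 + 2 * d * ((1 - δ)⁻¹ - 1)) * volume U := by
        have : 0 ≤ (1 - δ)⁻¹ - 1 := by
          rw [sub_nonneg, one_le_inv₀ (by linarith)]; linarith
        rw [Finset.sum_const, Finset.card_range, nsmul_eq_mul,
          ENNReal.ofReal_add zero_le_one (by positivity), ENNReal.ofReal_mul (by positivity),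
          ENNReal.ofReal_mul (by positivity)]
        simp only [ENNReal.ofReal_one, ENNReal.ofReal_ofNat, ENNReal.ofReal_natCast]
        ring

theorem hankel_stmt7 (d : ℕ) (hd : 1 ≤ d) (δ : ℝ) (hδ : δ ∈ Set.Ioo (0 : ℝ) 1)
    (U : Set ℝ) (hU : MeasurableSet U) (hUfin : volume U < ⊤) :
    volume {x : ℝ | ∃ I : Set ℝ, memShiftedFamily d I ∧ x ∈ I ∧
        ENNReal.ofReal (1 - δ) * volume I < volume (U ∩ I)} ≤
      ENNReal.ofReal (1 + 2 * d * ((1 - δ)⁻¹ - 1)) * volume U :=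
  hankel_stmt7_general d δ hδ U hU hUfin
end
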